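/- arXiv:2402.14287 — 5 statements merged into one kernel-verified Lean document; each statement's English description precedes it below -/
import Mathlib

section
/- The set of minimizers of the tropical Fermat–Weber objective is max-tropically convex: if x and y are both minimizers and a, b ∈ ℝ, then the coordinatewise maximum z with z_j = max(a + x_j, b + y_j) is also a minimizer. -/
/-! The objective is invariant under adding a constant to every coordinate and is submodular
for the coordinatewise lattice operations: `f (u ⊔ v) + f (u ⊓ v) ≤ f u + f v`, because each
`max_j` term can only drop and each `min_k` term only rise when `(u, v)` is replaced by
`(u ⊔ v, u ⊓ v)`. For minimizers `x`, `y` of a submodular function, `f (x ⊓ y) ≥ f x` forces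
`f (x ⊔ y) ≤ f y`, so `x ⊔ y` is a minimizer; translation invariance lets us shift `x` and `y`
by `a` and `b` first. -/

open Finset

noncomputable def dtr {d : ℕ} (u v : Fin (d+1) → ℝ) : ℝ :=
  univ.sup' univ_nonempty (fun j => u j - v j) -
  univ.inf' univ_nonempty (fun j => u j - v j)

noncomputable def fw {d n : ℕ} (p : Fin n → Fin (d+1) → ℝ) (x : Fin (d+1) → ℝ) : ℝ :=
  ∑ i, dtr x (p i)

section SubmodularMinimizers

variable {α β : Type*} [Lattice α] [AddCommGroup β] [PartialOrder β] [IsOrderedAddMonoid β]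

theorem IsMinOn.sup_of_submodular {f : α → β} (hf : ∀ u v, f (u ⊔ v) + f (u ⊓ v) ≤ f u + f v)
    {x y : α} (hx : IsMinOn f Set.univ x) (hy : IsMinOn f Set.univ y) :
    IsMinOn f Set.univ (x ⊔ y) := by
  rw [isMinOn_univ_iff] at hx hy ⊢
  intro w
  have hsup : f (x ⊔ y) ≤ f y :=
    le_of_add_le_add_right <| calc
      f (x ⊔ y) + f x ≤ f (x ⊔ y) + f (x ⊓ y) := add_le_add_right (hx _) _
      _ ≤ f x + f y := hf x y
      _ = f y + f x := add_comm _ _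
  exact hsup.trans (hy w)

end SubmodularMinimizers

namespace Finset

variable {ι α : Type*} [AddCommGroup α] [LinearOrder α] [IsOrderedAddMonoid α] {s : Finset ι}

theorem sup'_sup_add_sup'_inf_le (hs : s.Nonempty) (f g : ι → α) :
    s.sup' hs (f ⊔ g) + s.sup' hs (f ⊓ g) ≤ s.sup' hs f + s.sup' hs g := by
  have hle_sup : s.sup' hs (f ⊔ g) ≤ s.sup' hs f ⊔ s.sup' hs g :=
    sup'_le _ _ fun i hi => sup_le_sup (le_sup' f hi) (le_sup' g hi)
  have hle_inf : s.sup' hs (f ⊓ g) ≤ s.sup' hs f ⊓ s.sup' hs g :=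
    sup'_le _ _ fun i hi => inf_le_inf (le_sup' f hi) (le_sup' g hi)
  calc s.sup' hs (f ⊔ g) + s.sup' hs (f ⊓ g)
      ≤ s.sup' hs f ⊔ s.sup' hs g + s.sup' hs f ⊓ s.sup' hs g := add_le_add hle_sup hle_inf
    _ = s.sup' hs f + s.sup' hs g := max_add_min _ _

theorem inf'_add_inf'_le_inf'_sup_add_inf'_inf (hs : s.Nonempty) (f g : ι → α) :
    s.inf' hs f + s.inf' hs g ≤ s.inf' hs (f ⊔ g) + s.inf' hs (f ⊓ g) := by
  have hsup_le : s.inf' hs f ⊔ s.inf' hs g ≤ s.inf' hs (f ⊔ g) :=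
    le_inf' _ _ fun i hi => sup_le_sup (inf'_le f hi) (inf'_le g hi)
  have hinf_le : s.inf' hs f ⊓ s.inf' hs g ≤ s.inf' hs (f ⊓ g) :=
    le_inf' _ _ fun i hi => inf_le_inf (inf'_le f hi) (inf'_le g hi)
  calc s.inf' hs f + s.inf' hs g
      = s.inf' hs f ⊔ s.inf' hs g + s.inf' hs f ⊓ s.inf' hs g := (max_add_min _ _).symm
    _ ≤ s.inf' hs (f ⊔ g) + s.inf' hs (f ⊓ g) := add_le_add hsup_le hinf_le

theorem add_inf' (s : Finset ι) (f : ι → α) (a : α) (hs : s.Nonempty) :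
    a + s.inf' hs f = s.inf' hs fun i => a + f i :=
  map_finset_inf' (OrderIso.addLeft a) hs f

end Finset

section TropicalDistance

variable {d : ℕ}

theorem dtr_eq (u v : Fin (d+1) → ℝ) :
    dtr u v = univ.sup' univ_nonempty (u - v) - univ.inf' univ_nonempty (u - v) := rfl

theorem dtr_const_add (c : ℝ) (x v : Fin (d+1) → ℝ) : dtr (fun j => c + x j) v = dtr x v := by
  have hshift : (fun j => c + x j - v j) = fun j => c + (x j - v j) := by
    funext j; exact add_sub_assoc _ _ _
  simp only [dtr, hshift, ← add_sup', ← add_inf']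
  exact add_sub_add_left_eq_sub _ _ _

theorem dtr_sup_add_dtr_inf_le (u v w : Fin (d+1) → ℝ) :
    dtr (u ⊔ v) w + dtr (u ⊓ v) w ≤ dtr u w + dtr v w := by
  simp only [dtr_eq, sup_sub, inf_sub]
  linarith [sup'_sup_add_sup'_inf_le univ_nonempty (u - w) (v - w),
    inf'_add_inf'_le_inf'_sup_add_inf'_inf univ_nonempty (u - w) (v - w)]

variable {n : ℕ} (p : Fin n → Fin (d+1) → ℝ)

theorem fw_const_add (c : ℝ) (x : Fin (d+1) → ℝ) : fw p (fun j => c + x j) = fw p x :=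
  sum_congr rfl fun i _ => dtr_const_add c x (p i)

theorem fw_sup_add_fw_inf_le (u v : Fin (d+1) → ℝ) :
    fw p (u ⊔ v) + fw p (u ⊓ v) ≤ fw p u + fw p v := by
  simp only [fw, ← sum_add_distrib]
  exact sum_le_sum fun i _ => dtr_sup_add_dtr_inf_le u v (p i)

theorem isMinOn_fw_const_add {c : ℝ} {x : Fin (d+1) → ℝ} (hx : IsMinOn (fw p) Set.univ x) :
    IsMinOn (fw p) Set.univ (fun j => c + x j) := by
  rwa [isMinOn_univ_iff, fw_const_add, ← isMinOn_univ_iff]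

end TropicalDistance

theorem stmt8 {d n : ℕ} (p : Fin n → Fin (d+1) → ℝ) (x y : Fin (d+1) → ℝ) (a b : ℝ)
    (hx : ∀ w, fw p x ≤ fw p w) (hy : ∀ w, fw p y ≤ fw p w) :
    ∀ w, fw p (fun j => max (a + x j) (b + y j)) ≤ fw p w := by
  have hx' := isMinOn_fw_const_add p (c := a) (isMinOn_univ_iff.2 hx)
  have hy' := isMinOn_fw_const_add p (c := b) (isMinOn_univ_iff.2 hy)
  exact isMinOn_univ_iff.1 (hx'.sup_of_submodular (fw_sup_add_fw_inf_le p) hy')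
end

section
/- The set of minimizers of the tropical Fermat–Weber objective is min-tropically convex: if x and y are both minimizers and a, b ∈ ℝ, then the coordinatewise minimum z with z_j = min(a + x_j, b + y_j) is also a minimizer. -/
open Finset

lemma dtr_shift {d : ℕ} (u v : Fin (d+1) → ℝ) (c : ℝ) :
    dtr (fun j => c + u j) v = dtr u v := by
  unfold dtr
  have h1 : (univ.sup' univ_nonempty (fun j => c + u j - v j))
      = c + univ.sup' univ_nonempty (fun j => u j - v j) := by
    apply le_antisymm
    · apply Finset.sup'_le
      intro j _
      have := Finset.le_sup' (fun j => u j - v j) (mem_univ j)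
      linarith
    · obtain ⟨j, _, hj⟩ := Finset.exists_mem_eq_sup' (univ_nonempty (α := Fin (d+1)))
        (fun j => u j - v j)
      have := Finset.le_sup' (fun j => c + u j - v j) (mem_univ j)
      simp only [hj] at *
      linarith
  have h2 : (univ.inf' univ_nonempty (fun j => c + u j - v j))
      = c + univ.inf' univ_nonempty (fun j => u j - v j) := by
    apply le_antisymm
    · obtain ⟨j, _, hj⟩ := Finset.exists_mem_eq_inf' (univ_nonempty (α := Fin (d+1)))
        (fun j => u j - v j)
      have := Finset.inf'_le (fun j => c + u j - v j) (mem_univ j)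
      simp only [hj] at *
      linarith
    · apply Finset.le_inf'
      intro j _
      have := Finset.inf'_le (fun j => u j - v j) (mem_univ j)
      linarith
  rw [h1, h2]
  ring

lemma dtr_minmax {d : ℕ} (u v q : Fin (d+1) → ℝ) :
    dtr (fun j => min (u j) (v j)) q + dtr (fun j => max (u j) (v j)) q
      ≤ dtr u q + dtr v q := by
  unfold dtr
  set Mu := univ.sup' univ_nonempty (fun j => u j - q j) with hMu
  set mu := univ.inf' univ_nonempty (fun j => u j - q j) with hmu
  set Mv := univ.sup' univ_nonempty (fun j => v j - q j) with hMv
  set mv := univ.inf' univ_nonempty (fun j => v j - q j) with hmv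
  have hS1 : univ.sup' univ_nonempty (fun j => min (u j) (v j) - q j) ≤ min Mu Mv := by
    apply Finset.sup'_le
    intro j _
    have : min (u j) (v j) - q j = min (u j - q j) (v j - q j) := by
      rw [min_sub_sub_right]
    rw [this]
    exact min_le_min (Finset.le_sup' (fun j => u j - q j) (mem_univ j)) (Finset.le_sup' (fun j => v j - q j) (mem_univ j))
  have hI1 : min mu mv ≤ univ.inf' univ_nonempty (fun j => min (u j) (v j) - q j) := by
    apply Finset.le_inf'
    intro j _
    have : min (u j) (v j) - q j = min (u j - q j) (v j - q j) := by
      rw [min_sub_sub_right]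
    rw [this]
    exact min_le_min (Finset.inf'_le (fun j => u j - q j) (mem_univ j)) (Finset.inf'_le (fun j => v j - q j) (mem_univ j))
  have hS2 : univ.sup' univ_nonempty (fun j => max (u j) (v j) - q j) ≤ max Mu Mv := by
    apply Finset.sup'_le
    intro j _
    have : max (u j) (v j) - q j = max (u j - q j) (v j - q j) := by
      rw [max_sub_sub_right]
    rw [this]
    exact max_le_max (Finset.le_sup' (fun j => u j - q j) (mem_univ j)) (Finset.le_sup' (fun j => v j - q j) (mem_univ j))
  have hI2 : max mu mv ≤ univ.inf' univ_nonempty (fun j => max (u j) (v j) - q j) := by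
    apply Finset.le_inf'
    intro j _
    have : max (u j) (v j) - q j = max (u j - q j) (v j - q j) := by
      rw [max_sub_sub_right]
    rw [this]
    exact max_le_max (Finset.inf'_le (fun j => u j - q j) (mem_univ j)) (Finset.inf'_le (fun j => v j - q j) (mem_univ j))
  have h1 : min Mu Mv + max Mu Mv = Mu + Mv := min_add_max _ _
  have h2 : min mu mv + max mu mv = mu + mv := min_add_max _ _
  linarith

lemma fw_shift {d n : ℕ} (p : Fin n → Fin (d+1) → ℝ) (x : Fin (d+1) → ℝ) (c : ℝ) :
    fw p (fun j => c + x j) = fw p x := by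
  unfold fw
  exact Finset.sum_congr rfl fun i _ => dtr_shift x (p i) c

theorem stmt9 {d n : ℕ} (p : Fin n → Fin (d+1) → ℝ) (x y : Fin (d+1) → ℝ) (a b : ℝ)
    (hx : ∀ w, fw p x ≤ fw p w) (hy : ∀ w, fw p y ≤ fw p w) :
    ∀ w, fw p (fun j => min (a + x j) (b + y j)) ≤ fw p w := by
  intro w
  set u : Fin (d+1) → ℝ := fun j => a + x j with hu
  set v : Fin (d+1) → ℝ := fun j => b + y j with hv
  have key : fw p (fun j => min (u j) (v j)) + fw p (fun j => max (u j) (v j))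
      ≤ fw p u + fw p v := by
    unfold fw
    rw [← Finset.sum_add_distrib, ← Finset.sum_add_distrib]
    exact Finset.sum_le_sum fun i _ => dtr_minmax u v (p i)
  have hfu : fw p u = fw p x := fw_shift p x a
  have hfv : fw p v = fw p y := fw_shift p y b
  have hxy : fw p y = fw p x := le_antisymm (hy x) (hx y)
  have hmax : fw p x ≤ fw p (fun j => max (u j) (v j)) := hx _
  have : fw p (fun j => min (u j) (v j)) ≤ fw p x := by linarith
  exact this.trans (hx w)
end

section
/- Gradient formula on full-dimensional cells: suppose x ∈ ℝ^d and for each i ∈ [n] the maximum of j ↦ x_j - v_{ij} is attained at a unique index a(i) and the minimum at a unique index b(i). Then for all sufficiently small δ ∈ ℝ^d (small enough that the argmax/argmin indices are unchanged), f(x + δ) = f(x) + Σ_{j=1}^d (#{i : a(i)=j} - #{i : b(i)=j}) · δ_j, where f(x) = Σ_i d_tr(x, v_i). -/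
open Finset

theorem stmt16 {d n : ℕ} (V : Fin n → Fin (d+1) → ℝ) (x : Fin (d+1) → ℝ)
    (a b : Fin n → Fin (d+1))
    (ha : ∀ i j, x j - V i j ≤ x (a i) - V i (a i))
    (ha' : ∀ i j, x j - V i j = x (a i) - V i (a i) → j = a i)
    (hb : ∀ i j, x (b i) - V i (b i) ≤ x j - V i j)
    (hb' : ∀ i j, x j - V i j = x (b i) - V i (b i) → j = b i) :
    ∃ ε > 0, ∀ δ : Fin (d+1) → ℝ, (∀ j, |δ j| < ε) →
      fw V (fun j => x j + δ j) = fw V x +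
        ∑ j : Fin (d+1),
          (((univ.filter fun i => a i = j).card : ℝ) -
            ((univ.filter fun i => b i = j).card : ℝ)) * δ j := by
  classical
  set ga : Fin n → Fin (d+1) → ℝ := fun i j =>
    if j = a i then 1 else ((x (a i) - V i (a i)) - (x j - V i j)) / 2 with hga
  set gb : Fin n → Fin (d+1) → ℝ := fun i j =>
    if j = b i then 1 else ((x j - V i j) - (x (b i) - V i (b i))) / 2 with hgb
  have hgapos : ∀ i j, 0 < ga i j := by
    intro i j
    by_cases h : j = a i
    · simp [hga, h]
    · have h1 := ha i j
      have h2 : x j - V i j ≠ x (a i) - V i (a i) := fun e => h (ha' i j e)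
      have hlt : x j - V i j < x (a i) - V i (a i) := lt_of_le_of_ne h1 h2
      simp only [hga, if_neg h]
      linarith
  have hgbpos : ∀ i j, 0 < gb i j := by
    intro i j
    by_cases h : j = b i
    · simp [hgb, h]
    · have h1 := hb i j
      have h2 : x j - V i j ≠ x (b i) - V i (b i) := fun e => h (hb' i j e)
      have hlt : x (b i) - V i (b i) < x j - V i j := lt_of_le_of_ne h1 (Ne.symm h2)
      simp only [hgb, if_neg h]
      linarith
  set G : Fin n × Fin (d+1) → ℝ := fun p => min (ga p.1 p.2) (gb p.1 p.2) with hG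
  set ε : ℝ := if h : (univ : Finset (Fin n × Fin (d+1))).Nonempty then univ.inf' h G else 1
    with hε
  have hεpos : 0 < ε := by
    rw [hε]
    split_ifs with h
    · rw [Finset.lt_inf'_iff]
      intro p _
      exact lt_min (hgapos p.1 p.2) (hgbpos p.1 p.2)
    · norm_num
  have hεle : ∀ (i : Fin n) (j : Fin (d+1)), ε ≤ G (i, j) := by
    intro i j
    have hne : (univ : Finset (Fin n × Fin (d+1))).Nonempty := ⟨(i, j), mem_univ _⟩
    rw [hε, dif_pos hne]
    exact Finset.inf'_le _ (mem_univ _)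
  refine ⟨ε, hεpos, ?_⟩
  intro δ hδ
  have key : ∀ i, dtr (fun j => x j + δ j) (V i) = dtr x (V i) + (δ (a i) - δ (b i)) := by
    intro i
    have hsup : univ.sup' univ_nonempty (fun j => (x j + δ j) - V i j)
        = x (a i) + δ (a i) - V i (a i) := by
      apply le_antisymm
      · apply Finset.sup'_le
        intro j _
        by_cases h : j = a i
        · subst h; linarith
        · have hgle : ε ≤ ga i j := le_trans (hεle i j) (min_le_left _ _)
          have hgval : ga i j = ((x (a i) - V i (a i)) - (x j - V i j)) / 2 := by
            simp [hga, h]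
          have h1 := abs_lt.mp (hδ j)
          have h2 := abs_lt.mp (hδ (a i))
          rw [hgval] at hgle
          linarith [h1.1, h1.2, h2.1, h2.2]
      · exact Finset.le_sup' (fun j => (x j + δ j) - V i j) (mem_univ (a i))
    have hinf : univ.inf' univ_nonempty (fun j => (x j + δ j) - V i j)
        = x (b i) + δ (b i) - V i (b i) := by
      apply le_antisymm
      · exact Finset.inf'_le (fun j => (x j + δ j) - V i j) (mem_univ (b i))
      · apply Finset.le_inf'
        intro j _
        by_cases h : j = b i
        · subst h; linarith
        · have hgle : ε ≤ gb i j := le_trans (hεle i j) (min_le_right _ _)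
          have hgval : gb i j = ((x j - V i j) - (x (b i) - V i (b i))) / 2 := by
            simp [hgb, h]
          have h1 := abs_lt.mp (hδ j)
          have h2 := abs_lt.mp (hδ (b i))
          rw [hgval] at hgle
          linarith [h1.1, h1.2, h2.1, h2.2]
    have hsup0 : univ.sup' univ_nonempty (fun j => x j - V i j) = x (a i) - V i (a i) := by
      apply le_antisymm
      · exact Finset.sup'_le _ _ (fun j _ => ha i j)
      · exact Finset.le_sup' (fun j => x j - V i j) (mem_univ (a i))
    have hinf0 : univ.inf' univ_nonempty (fun j => x j - V i j) = x (b i) - V i (b i) := by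
      apply le_antisymm
      · exact Finset.inf'_le (fun j => x j - V i j) (mem_univ (b i))
      · exact Finset.le_inf' _ _ (fun j _ => hb i j)
    simp only [dtr, hsup, hinf, hsup0, hinf0]
    ring
  have hfa : ∀ (c : Fin n → Fin (d+1)),
      ∑ i, δ (c i) = ∑ j, ((univ.filter fun i => c i = j).card : ℝ) * δ j := by
    intro c
    calc ∑ i, δ (c i) = ∑ i, ∑ j, if c i = j then δ j else 0 := by
          refine Finset.sum_congr rfl fun i _ => ?_
          rw [Finset.sum_ite_eq]
          simp
      _ = ∑ j, ∑ i, if c i = j then δ j else 0 := Finset.sum_comm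
      _ = ∑ j, ((univ.filter fun i => c i = j).card : ℝ) * δ j := by
          refine Finset.sum_congr rfl fun j _ => ?_
          rw [← Finset.sum_filter]
          simp [Finset.sum_const, nsmul_eq_mul]
  have hfw : fw V (fun j => x j + δ j) = fw V x + (∑ i, δ (a i) - ∑ i, δ (b i)) := by
    simp only [fw, key, Finset.sum_add_distrib, Finset.sum_sub_distrib]
  rw [hfw, hfa a, hfa b]
  rw [← Finset.sum_sub_distrib]
  congr 1
  refine Finset.sum_congr rfl fun j _ => ?_
  ring
end

section
/- First-order optimality for interior points: under the assumptions of the gradient formula (unique argmax a(i) and argmin b(i) for each i at x), if the coarse-type balance holds, i.e., #{i : a(i) = j} = #{i : b(i) = j} for every j ∈ [d], then x is a global minimizer of the tropical Fermat–Weber objective f. -/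
open Finset

theorem stmt17 {d n : ℕ} (V : Fin n → Fin (d+1) → ℝ) (x : Fin (d+1) → ℝ)
    (a b : Fin n → Fin (d+1))
    (ha : ∀ i j, x j - V i j ≤ x (a i) - V i (a i))
    (ha' : ∀ i j, x j - V i j = x (a i) - V i (a i) → j = a i)
    (hb : ∀ i j, x (b i) - V i (b i) ≤ x j - V i j)
    (hb' : ∀ i j, x j - V i j = x (b i) - V i (b i) → j = b i)
    (hbal : ∀ j : Fin (d+1),
      (univ.filter fun i => a i = j).card = (univ.filter fun i => b i = j).card) :
    ∀ y, fw V x ≤ fw V y := by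
  -- key combinatorial fact: for any w, ∑ i, (w (a i) - w (b i)) = 0
  have key : ∀ w : Fin (d+1) → ℝ, ∑ i, (w (a i) - w (b i)) = 0 := by
    intro w
    have hsum : ∀ (c : Fin n → Fin (d+1)),
        ∑ i, w (c i) = ∑ j, ((univ.filter fun i => c i = j).card : ℝ) * w j := by
      intro c
      rw [← Finset.sum_fiberwise univ c (fun i => w (c i))]
      refine Finset.sum_congr rfl fun j _ => ?_
      rw [Finset.sum_congr rfl (fun i hi => by
        simp only [Finset.mem_filter] at hi; rw [hi.2] : ∀ i ∈ univ.filter fun i => c i = j,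
          w (c i) = w j)]
      simp [mul_comm]
    rw [Finset.sum_sub_distrib, hsum a, hsum b]
    simp [hbal]
  intro y
  have hx : fw V x = ∑ i, (V i (b i) - V i (a i)) := by
    unfold fw dtr
    have : ∀ i, (univ.sup' univ_nonempty fun j => x j - V i j) -
        (univ.inf' univ_nonempty fun j => x j - V i j)
        = (x (a i) - x (b i)) + (V i (b i) - V i (a i)) := by
      intro i
      have hs : (univ.sup' univ_nonempty fun j => x j - V i j) = x (a i) - V i (a i) :=
        le_antisymm (Finset.sup'_le _ _ fun j _ => ha i j)
          (Finset.le_sup' (fun j => x j - V i j) (Finset.mem_univ (a i)))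
      have hi : (univ.inf' univ_nonempty fun j => x j - V i j) = x (b i) - V i (b i) :=
        le_antisymm (Finset.inf'_le (fun j => x j - V i j) (Finset.mem_univ (b i)))
          (Finset.le_inf' _ _ fun j _ => hb i j)
      rw [hs, hi]; ring
    rw [Finset.sum_congr rfl fun i _ => this i, Finset.sum_add_distrib, key x, zero_add]
  have hy : fw V y ≥ ∑ i, (V i (b i) - V i (a i)) := by
    unfold fw dtr
    have : ∀ i, (y (a i) - y (b i)) + (V i (b i) - V i (a i)) ≤
        (univ.sup' univ_nonempty fun j => y j - V i j) -
        (univ.inf' univ_nonempty fun j => y j - V i j) := by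
      intro i
      have hs : y (a i) - V i (a i) ≤ univ.sup' univ_nonempty fun j => y j - V i j :=
        Finset.le_sup' (fun j => y j - V i j) (Finset.mem_univ (a i))
      have hi : (univ.inf' univ_nonempty fun j => y j - V i j) ≤ y (b i) - V i (b i) :=
        Finset.inf'_le (fun j => y j - V i j) (Finset.mem_univ (b i))
      linarith
    calc ∑ i, (V i (b i) - V i (a i))
        = ∑ i, ((y (a i) - y (b i)) + (V i (b i) - V i (a i))) := by
          rw [Finset.sum_add_distrib, key y, zero_add]
      _ ≤ _ := Finset.sum_le_sum fun i _ => this i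
  linarith [hx, hy]
end

section
/- Zero subgradient characterization: x minimizes the tropical Fermat–Weber objective f if and only if there exist, for each i ∈ [n], indices j_i ∈ argmax_j (x_j - v_{ij}) and k_i ∈ argmin_j (x_j - v_{ij}) such that for every coordinate j ∈ [d], #{i : j_i = j} = #{i : k_i = j}. -/
open Finset

/-- If the fibers of `js` and `ks` have equal cardinalities, then composing any
function with `js` and with `ks` gives the same sum. -/
lemma balanced_sum {d n : ℕ} (js ks : Fin n → Fin (d+1))
    (hcard : ∀ j : Fin (d+1),
      (univ.filter fun i => js i = j).card = (univ.filter fun i => ks i = j).card)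
    (z : Fin (d+1) → ℝ) : ∑ i, z (js i) = ∑ i, z (ks i) := by
  classical
  rw [← Finset.sum_fiberwise univ js (fun i => z (js i)),
      ← Finset.sum_fiberwise univ ks (fun i => z (ks i))]
  refine Finset.sum_congr rfl fun j _ => ?_
  have h1 : ∑ i ∈ univ.filter (fun i => js i = j), z (js i)
      = (univ.filter fun i => js i = j).card • z j := by
    rw [← Finset.sum_const]
    exact Finset.sum_congr rfl fun i hi => by
      rw [(Finset.mem_filter.1 hi).2]
  have h2 : ∑ i ∈ univ.filter (fun i => ks i = j), z (ks i)
      = (univ.filter fun i => ks i = j).card • z j := by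
    rw [← Finset.sum_const]
    exact Finset.sum_congr rfl fun i hi => by
      rw [(Finset.mem_filter.1 hi).2]
  rw [h1, h2, hcard j]

theorem stmt19 {d n : ℕ} (V : Fin n → Fin (d+1) → ℝ) (x : Fin (d+1) → ℝ) :
    (∀ y, fw V x ≤ fw V y) ↔
    ∃ js ks : Fin n → Fin (d+1),
      (∀ i j, x j - V i j ≤ x (js i) - V i (js i)) ∧
      (∀ i j, x (ks i) - V i (ks i) ≤ x j - V i j) ∧
      (∀ j : Fin (d+1),
        (univ.filter fun i => js i = j).card = (univ.filter fun i => ks i = j).card) := by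
  classical
  constructor
  · intro hmin
    -- notation
    set g : Fin n → Fin (d+1) → ℝ := fun i j => x j - V i j with hg
    set M : Fin n → ℝ := fun i => univ.sup' univ_nonempty (g i) with hM
    set m : Fin n → ℝ := fun i => univ.inf' univ_nonempty (g i) with hm
    set A : Fin n → Finset (Fin (d+1)) :=
      fun i => univ.filter (fun j => ∀ j', g i j' ≤ g i j) with hA
    set B : Fin n → Finset (Fin (d+1)) :=
      fun i => univ.filter (fun j => ∀ j', g i j ≤ g i j') with hB
    have hAne : ∀ i, (A i).Nonempty := fun i => by
      obtain ⟨j, hj⟩ := Finite.exists_max (g i)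
      exact ⟨j, by simp [hA, hj]⟩
    have hBne : ∀ i, (B i).Nonempty := fun i => by
      obtain ⟨j, hj⟩ := Finite.exists_min (g i)
      exact ⟨j, by simp [hB, hj]⟩
    -- the positive gaps and epsilon
    set gaps : Finset ℝ :=
      (((univ : Finset (Fin n × Fin (d+1))).image (fun p => M p.1 - g p.1 p.2)) ∪
       ((univ : Finset (Fin n × Fin (d+1))).image (fun p => g p.1 p.2 - m p.1))).filter
        (fun r => 0 < r) with hgaps
    set ε : ℝ := (insert 1 gaps).inf' (insert_nonempty _ _) id with hε
    have hεpos : 0 < ε := by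
      rw [hε]
      rw [Finset.lt_inf'_iff]
      intro a ha
      rcases Finset.mem_insert.1 ha with h | h
      · simp [h]
      · exact (Finset.mem_filter.1 h).2
    have hεle : ∀ r ∈ gaps, ε ≤ r := fun r hr =>
      Finset.inf'_le id (Finset.mem_insert_of_mem hr)
    have hεgapM : ∀ i j, g i j < M i → g i j ≤ M i - ε := by
      intro i j hlt
      have : M i - g i j ∈ gaps := by
        refine Finset.mem_filter.2 ⟨Finset.mem_union_left _ ?_, by linarith⟩
        exact Finset.mem_image.2 ⟨(i, j), Finset.mem_univ _, rfl⟩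
      have := hεle _ this
      linarith
    have hεgapm : ∀ i j, m i < g i j → m i + ε ≤ g i j := by
      intro i j hlt
      have : g i j - m i ∈ gaps := by
        refine Finset.mem_filter.2 ⟨Finset.mem_union_right _ ?_, by linarith⟩
        exact Finset.mem_image.2 ⟨(i, j), Finset.mem_univ _, rfl⟩
      have := hεle _ this
      linarith
    have hgM : ∀ i j, g i j ≤ M i := fun i j => Finset.le_sup' (g i) (mem_univ j)
    have hmg : ∀ i j, m i ≤ g i j := fun i j => Finset.inf'_le (g i) (mem_univ j)
    -- Hall condition
    set t : Fin n → Finset (Fin n) :=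
      fun i => univ.filter (fun i' => (A i ∩ B i').Nonempty) with ht
    have hall : ∀ s : Finset (Fin n), s.card ≤ (s.biUnion t).card := by
      intro S
      by_contra hS
      push_neg at hS
      set T : Finset (Fin (d+1)) := S.biUnion A with hT
      set y : Fin (d+1) → ℝ := fun j => if j ∈ T then x j - ε else x j with hy
      -- per-sample bound
      have key : ∀ i : Fin n, dtr y (V i) ≤ M i - m i
          - (if A i ⊆ T then ε else 0) + (if (B i ∩ T).Nonempty then ε else 0) := by
        intro i
        have hsup : univ.sup' univ_nonempty (fun j => y j - V i j)
            ≤ M i - (if A i ⊆ T then ε else 0) := by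
          apply Finset.sup'_le
          intro j _
          by_cases hjT : j ∈ T
          · simp only [hy, if_pos hjT]
            have : x j - ε - V i j = g i j - ε := by simp [hg]; ring
            rw [this]
            split_ifs
            · linarith [hgM i j]
            · linarith [hgM i j, hεpos]
          · simp only [hy, if_neg hjT]
            have hgij : (x j - V i j) = g i j := rfl
            rw [hgij]
            split_ifs with hAT
            · -- j ∉ T ⊇ A i, so j ∉ A i, so g i j < M i
              have hjA : j ∉ A i := fun hja => hjT (hAT hja)
              have : ∃ j', g i j < g i j' := by
                by_contra hc
                push_neg at hc
                exact hjA (Finset.mem_filter.2 ⟨mem_univ _, hc⟩)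
              obtain ⟨j', hj'⟩ := this
              exact hεgapM i j (lt_of_lt_of_le hj' (hgM i j'))
            · linarith [hgM i j]
        have hinf : m i - (if (B i ∩ T).Nonempty then ε else 0)
            ≤ univ.inf' univ_nonempty (fun j => y j - V i j) := by
          apply Finset.le_inf'
          intro j _
          by_cases hjT : j ∈ T
          · simp only [hy, if_pos hjT]
            have heq : x j - ε - V i j = g i j - ε := by simp [hg]; ring
            rw [heq]
            split_ifs with hBT
            · linarith [hmg i j]
            · -- B i ∩ T empty, j ∈ T so j ∉ B i, so m i < g i j
              have hjB : j ∉ B i := by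
                intro hjb
                exact hBT ⟨j, Finset.mem_inter.2 ⟨hjb, hjT⟩⟩
              have : ∃ j', g i j' < g i j := by
                by_contra hc
                push_neg at hc
                exact hjB (Finset.mem_filter.2 ⟨mem_univ _, hc⟩)
              obtain ⟨j', hj'⟩ := this
              have := hεgapm i j (lt_of_le_of_lt (hmg i j') hj')
              linarith
          · simp only [hy, if_neg hjT]
            have hgij : (x j - V i j) = g i j := rfl
            rw [hgij]
            split_ifs
            · linarith [hmg i j, hεpos]
            · linarith [hmg i j]
        have : dtr y (V i) = univ.sup' univ_nonempty (fun j => y j - V i j)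
            - univ.inf' univ_nonempty (fun j => y j - V i j) := rfl
        rw [this]
        linarith
      -- sum up
      have hdtrx : ∀ i, dtr x (V i) = M i - m i := fun i => rfl
      have hsum : fw V y ≤ fw V x
          - ε * (univ.filter (fun i => A i ⊆ T)).card
          + ε * (univ.filter (fun i => (B i ∩ T).Nonempty)).card := by
        have h1 : fw V y ≤ ∑ i, (M i - m i
            - (if A i ⊆ T then ε else 0) + (if (B i ∩ T).Nonempty then ε else 0)) :=
          Finset.sum_le_sum fun i _ => key i
        have h2 : ∑ i, (M i - m i
            - (if A i ⊆ T then ε else 0) + (if (B i ∩ T).Nonempty then ε else 0))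
            = fw V x - ε * (univ.filter (fun i => A i ⊆ T)).card
              + ε * (univ.filter (fun i => (B i ∩ T).Nonempty)).card := by
          rw [show fw V x = ∑ i, (M i - m i) from Finset.sum_congr rfl fun i _ => hdtrx i]
          rw [Finset.sum_add_distrib, Finset.sum_sub_distrib]
          have e1 : ∑ i : Fin n, (if A i ⊆ T then ε else 0)
              = ε * (univ.filter (fun i => A i ⊆ T)).card := by
            rw [← Finset.sum_filter, Finset.sum_const, nsmul_eq_mul, mul_comm]
          have e2 : ∑ i : Fin n, (if (B i ∩ T).Nonempty then ε else 0)
              = ε * (univ.filter (fun i => (B i ∩ T).Nonempty)).card := by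
            rw [← Finset.sum_filter, Finset.sum_const, nsmul_eq_mul, mul_comm]
          rw [e1, e2]
        linarith [h2 ▸ h1]
      -- the two cardinalities
      have hcard1 : S.card ≤ (univ.filter (fun i => A i ⊆ T)).card := by
        apply Finset.card_le_card
        intro i hi
        exact Finset.mem_filter.2 ⟨mem_univ _, fun j hj => Finset.mem_biUnion.2 ⟨i, hi, hj⟩⟩
      have hcard2 : (univ.filter (fun i => (B i ∩ T).Nonempty)) = S.biUnion t := by
        ext i'
        rw [Finset.mem_filter, Finset.mem_biUnion]
        constructor
        · rintro ⟨-, j, hj⟩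
          obtain ⟨hjB, hjT⟩ := Finset.mem_inter.1 hj
          obtain ⟨i, hiS, hjA⟩ := Finset.mem_biUnion.1 hjT
          exact ⟨i, hiS, Finset.mem_filter.2 ⟨mem_univ _, ⟨j, Finset.mem_inter.2 ⟨hjA, hjB⟩⟩⟩⟩
        · rintro ⟨i, hiS, hi'⟩
          obtain ⟨j, hj⟩ := (Finset.mem_filter.1 hi').2
          obtain ⟨hjA, hjB⟩ := Finset.mem_inter.1 hj
          exact ⟨mem_univ _, ⟨j, Finset.mem_inter.2 ⟨hjB, Finset.mem_biUnion.2 ⟨i, hiS, hjA⟩⟩⟩⟩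
      have hstrict : fw V y < fw V x := by
        have hc2 : ((univ.filter (fun i => (B i ∩ T).Nonempty)).card : ℝ)
            < (univ.filter (fun i => A i ⊆ T)).card := by
          rw [hcard2]
          exact_mod_cast lt_of_lt_of_le hS hcard1
        have := hsum
        nlinarith [hεpos]
      exact absurd (hmin y) (not_le.2 hstrict)
    -- apply Hall
    obtain ⟨f, hfinj, hft⟩ := (Finset.all_card_le_biUnion_card_iff_exists_injective t).1 hall
    have hfbij : Function.Bijective f := (Finite.injective_iff_bijective).1 hfinj
    set e : Fin n ≃ Fin n := Equiv.ofBijective f hfbij with he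
    -- choose common coordinates
    have hchoice : ∀ i, ∃ j, j ∈ A i ∩ B (f i) := fun i => by
      have := hft i
      rw [ht, Finset.mem_filter] at this
      exact this.2
    choose c hc using hchoice
    have hcA : ∀ i, c i ∈ A i := fun i => (Finset.mem_inter.1 (hc i)).1
    have hcB : ∀ i, c i ∈ B (f i) := fun i => (Finset.mem_inter.1 (hc i)).2
    refine ⟨c, fun i => c (e.symm i), ?_, ?_, ?_⟩
    · intro i j
      have := (Finset.mem_filter.1 (hcA i)).2 j
      exact this
    · intro i j
      have h := (Finset.mem_filter.1 (hcB (e.symm i))).2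
      have hfe : f (e.symm i) = i := e.apply_symm_apply i
      rw [show (f (e.symm i)) = i from hfe] at h
      exact h j
    · intro j
      apply Finset.card_bij' (fun i _ => e i) (fun i _ => e.symm i)
      · intro a ha
        simp only [Finset.mem_filter, mem_univ, true_and] at ha ⊢
        rw [e.symm_apply_apply]
        exact ha
      · intro a ha
        simp only [Finset.mem_filter, mem_univ, true_and] at ha ⊢
        exact ha
      · intro a _; exact e.symm_apply_apply a
      · intro a _; exact e.apply_symm_apply a
  · rintro ⟨js, ks, hjs, hks, hcard⟩
    intro y
    have hzero : ∀ z : Fin (d+1) → ℝ, ∑ i, (z (js i) - z (ks i)) = 0 := by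
      intro z
      rw [Finset.sum_sub_distrib, balanced_sum js ks hcard z, sub_self]
    have hx : fw V x = ∑ i, ((x (js i) - V i (js i)) - (x (ks i) - V i (ks i))) := by
      refine Finset.sum_congr rfl fun i _ => ?_
      have hsup : univ.sup' univ_nonempty (fun j => x j - V i j)
          = x (js i) - V i (js i) :=
        le_antisymm (Finset.sup'_le _ _ fun j _ => hjs i j)
          (Finset.le_sup' (fun j => x j - V i j) (mem_univ (js i)))
      have hinf : univ.inf' univ_nonempty (fun j => x j - V i j)
          = x (ks i) - V i (ks i) :=
        le_antisymm (Finset.inf'_le (fun j => x j - V i j) (mem_univ (ks i)))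
          (Finset.le_inf' _ _ fun j _ => hks i j)
      rw [dtr, hsup, hinf]
    have hy : ∑ i, ((y (js i) - V i (js i)) - (y (ks i) - V i (ks i))) ≤ fw V y := by
      refine Finset.sum_le_sum fun i _ => ?_
      exact sub_le_sub (Finset.le_sup' (fun j => y j - V i j) (mem_univ (js i)))
        (Finset.inf'_le (fun j => y j - V i j) (mem_univ (ks i)))
    have hxval : fw V x = - ∑ i, (V i (js i) - V i (ks i)) := by
      rw [hx]
      have : ∀ i, (x (js i) - V i (js i)) - (x (ks i) - V i (ks i))
          = (x (js i) - x (ks i)) - (V i (js i) - V i (ks i)) := fun i => by ring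
      rw [Finset.sum_congr rfl fun i _ => this i, Finset.sum_sub_distrib, hzero x]
      ring
    have hyval : - ∑ i, (V i (js i) - V i (ks i))
        ≤ fw V y := by
      refine le_trans (le_of_eq ?_) hy
      have h1 : ∀ i, (y (js i) - V i (js i)) - (y (ks i) - V i (ks i))
          = (y (js i) - y (ks i)) - (V i (js i) - V i (ks i)) := fun i => by ring
      have h2 : ∑ i, ((y (js i) - V i (js i)) - (y (ks i) - V i (ks i)))
          = ∑ i, (y (js i) - y (ks i)) - ∑ i, (V i (js i) - V i (ks i)) := by
        rw [Finset.sum_congr rfl fun i _ => h1 i, Finset.sum_sub_distrib]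
      rw [h2, hzero y]
      ring
    rw [hxval]
    exact hyval
end
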